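/- arXiv:1306.3729 — 4 statements merged into one kernel-verified Lean document; each statement's English description precedes it below -/
import Mathlib

section
/- For a symmetric tensor X of order p over R^d and any tensor Y of the same shape, the generalized inner product ⟨X, Y⟩ = Σ_{i1,...,ip} X_{i1...ip} Y_{i1...ip} equals the inner product of their collapsed vectorizations ⟨cvec(X), cvec(Y)⟩, where cvec groups index tuples by their count profile c and assigns to each group the value (1/√|K(c)|) Σ_{k∈K(c)} X_k, with K(c) the set of index tuples with count profile c. -/
/-- The count profile of an index tuple `k : Fin p → Fin d`:
`cnt k i` is the number of positions `j` with `k j = i`. -/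
def cnt {d p : ℕ} (k : Fin p → Fin d) : Fin d → ℕ :=
  fun i => (Finset.univ.filter (fun j => k j = i)).card

/-- `Kset c` is the set of index tuples whose count profile is `c`. -/
def Kset {d p : ℕ} (c : Fin d → ℕ) : Finset (Fin p → Fin d) :=
  Finset.univ.filter (fun k => cnt k = c)

/-- Collapsed vectorization: the component of `cvec X` indexed by count profile `c`
is `(1/√|K(c)|) ∑_{k ∈ K(c)} X k`. -/
noncomputable def cvec {d p : ℕ} (X : (Fin p → Fin d) → ℝ) (c : Fin d → ℕ) : ℝ :=
  (Real.sqrt ((Kset (d := d) (p := p) c).card))⁻¹ * ∑ k ∈ Kset c, X k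

/- A symmetric tensor is constant on each class `K(c)`, since any two index tuples with the same
count profile differ by a permutation of positions. On such a class `∑ X_k Y_k = X_{k₀} ∑ Y_k`,
while `(∑ X_k)(∑ Y_k) = |K(c)| X_{k₀} ∑ Y_k`; the two factors `1/√|K(c)|` of `cvec` cancel the
`|K(c)|`. Summing over the classes gives the identity. -/

open Finset

theorem Equiv.Perm.exists_comp_eq_of_card_fiber_eq {ι α : Type*} [Fintype ι] [DecidableEq α]
    {f g : ι → α} (h : ∀ a, #{i | f i = a} = #{i | g i = a}) :
    ∃ σ : Equiv.Perm ι, f ∘ σ = g := by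
  have hfiber (a : α) : Fintype.card {i // g i = a} = Fintype.card {i // f i = a} := by
    rw [Fintype.card_subtype, Fintype.card_subtype, h]
  exact ⟨Equiv.ofFiberEquiv fun a => Fintype.equivOfCardEq (hfiber a),
    funext (Equiv.ofFiberEquiv_map _)⟩

theorem exists_perm_comp_eq_of_cnt_eq {d p : ℕ} {k k' : Fin p → Fin d} (h : cnt k = cnt k') :
    ∃ σ : Equiv.Perm (Fin p), k ∘ σ = k' :=
  Equiv.Perm.exists_comp_eq_of_card_fiber_eq (congrFun h)

theorem inv_sqrt_card_mul_sum_mul_inv_sqrt_card_mul_sum_of_eq_const {ι : Type*} (s : Finset ι)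
    (f g : ι → ℝ) (a : ℝ) (hf : ∀ i ∈ s, f i = a) :
    ((√(#s : ℝ))⁻¹ * ∑ i ∈ s, f i) * ((√(#s : ℝ))⁻¹ * ∑ i ∈ s, g i) = ∑ i ∈ s, f i * g i := by
  rcases s.eq_empty_or_nonempty with rfl | hs
  · simp
  have hcard : (0 : ℝ) < #s := by exact_mod_cast hs.card_pos
  have hsum_f : ∑ i ∈ s, f i = #s * a := by
    rw [sum_congr rfl hf, sum_const, nsmul_eq_mul]
  have hsum_fg : ∑ i ∈ s, f i * g i = a * ∑ i ∈ s, g i := by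
    rw [mul_sum]
    exact sum_congr rfl fun i hi => by rw [hf i hi]
  rw [hsum_f, hsum_fg]
  field_simp
  rw [Real.sq_sqrt hcard.le]

/-- For a symmetric tensor `X` of order `p` over `ℝ^d` and an arbitrary tensor `Y`,
the generalized inner product `⟨X, Y⟩ = ∑_k X_k Y_k` equals the inner product of the
collapsed vectorizations `⟨cvec X, cvec Y⟩` (summed over all realized count profiles). -/
theorem symmetric_inner_eq_cvec_inner {d p : ℕ}
    (X Y : (Fin p → Fin d) → ℝ)
    (hX : ∀ (σ : Equiv.Perm (Fin p)) (k : Fin p → Fin d), X (k ∘ σ) = X k) :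
    ∑ k : Fin p → Fin d, X k * Y k
      = ∑ c ∈ Finset.univ.image (cnt (d := d) (p := p)), cvec X c * cvec Y c := by
  rw [← sum_fiberwise_of_maps_to (g := cnt) fun k _ => mem_image_of_mem cnt (mem_univ k)]
  refine sum_congr rfl fun c hc => ?_
  obtain ⟨k₀, -, rfl⟩ := mem_image.1 hc
  refine (inv_sqrt_card_mul_sum_mul_inv_sqrt_card_mul_sum_of_eq_const _ X Y (X k₀)
    fun k hk => ?_).symm
  obtain ⟨σ, rfl⟩ := exists_perm_comp_eq_of_cnt_eq (mem_filter.1 hk).2.symm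
  exact hX σ k₀
end

section
/- In the mixture of linear regressions model, y³ = ⟨M3, x^⊗3⟩ + 3E[ε²]⟨M1, x⟩ + E[ε³] + η3(x), where η3(x) = ⟨β_h^⊗3 − M3, x^⊗3⟩ + 3ε⟨β_h^⊗2, x^⊗2⟩ + 3(ε²⟨β_h, x⟩ − E[ε²]⟨M1, x⟩) + (ε³ − E[ε³]) has conditional mean zero given x. -/
/-!
Write `c_h = ⟨β_h, x⟩`. Since `H` takes finitely many values with law `π`,
`E[c_H ^ p] = ∑ π_h c_h ^ p = ⟨M_p, x^⊗p⟩`. Hence `η₃` is the sum of the centred variables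
`c_H³ - E[c_H³]`, `3 (c_H ε² - E[c_H ε²])`, `ε³ - E[ε³]` and of `3 c_H² ε`, where independence of
`H` and `ε` gives `E[c_H ε²] = m₂ ⟨M₁, x⟩` and `E[c_H² ε] = E[c_H²] E[ε] = 0`.
-/

open MeasureTheory ProbabilityTheory

section FiniteValued

variable {Ω ι : Type*} [MeasurableSpace Ω] {μ : Measure Ω} [IsFiniteMeasure μ]
  [Fintype ι] [MeasurableSpace ι] [MeasurableSingletonClass ι] {H : Ω → ι}

lemma integrable_comp_of_fintype (hH : Measurable H) (φ : ι → ℝ) :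
    Integrable (fun ω => φ (H ω)) μ :=
  Integrable.of_finite.comp_measurable hH

lemma integral_comp_of_fintype (hH : Measurable H) (φ : ι → ℝ) :
    ∫ ω, φ (H ω) ∂μ = ∑ h, μ.real (H ⁻¹' {h}) * φ h := by
  rw [← integral_map hH.aemeasurable (measurable_of_finite φ).aestronglyMeasurable,
    integral_fintype Integrable.of_finite]
  simp [Measure.real, Measure.map_apply hH (measurableSet_singleton _)]

variable {E : Type*} [MeasurableSpace E] {ε : Ω → E}

lemma ProbabilityTheory.IndepFun.integrable_comp_mul_comp_of_fintype (hind : IndepFun H ε μ) (hH : Measurable H)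
    (φ : ι → ℝ) {ψ : E → ℝ} (hψ : Measurable ψ) (hψε : Integrable (fun ω => ψ (ε ω)) μ) :
    Integrable (fun ω => φ (H ω) * ψ (ε ω)) μ :=
  (hind.comp (measurable_of_finite φ) hψ).integrable_mul (integrable_comp_of_fintype hH φ) hψε

lemma ProbabilityTheory.IndepFun.integral_comp_mul_comp_of_fintype (hind : IndepFun H ε μ) (hH : Measurable H)
    (φ : ι → ℝ) {ψ : E → ℝ} (hψ : Measurable ψ) (hψε : Integrable (fun ω => ψ (ε ω)) μ) :
    ∫ ω, φ (H ω) * ψ (ε ω) ∂μ = (∫ ω, φ (H ω) ∂μ) * ∫ ω, ψ (ε ω) ∂μ :=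
  (hind.comp (measurable_of_finite φ) hψ).integral_fun_mul_eq_mul_integral
    (integrable_comp_of_fintype hH φ).aestronglyMeasurable hψε.aestronglyMeasurable

end FiniteValued

lemma integral_sub_integral_eq_zero {Ω : Type*} [MeasurableSpace Ω] {μ : Measure Ω}
    [IsProbabilityMeasure μ] {f : Ω → ℝ} (hf : Integrable f μ) :
    ∫ ω, (f ω - ∫ ω', f ω' ∂μ) ∂μ = 0 := by
  rw [integral_sub hf (integrable_const _), integral_const, probReal_univ, one_smul, sub_self]

section MomentTensors

variable {R ι κ : Type*} [CommSemiring R] [Fintype ι] [Fintype κ]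

lemma sum_first_moment_mul (π : κ → R) (β : κ → ι → R) (x : ι → R) :
    ∑ i, (∑ h, π h • β h) i * x i = ∑ h, π h * ∑ i, β h i * x i := by
  simp only [Finset.sum_apply, Pi.smul_apply, smul_eq_mul, Finset.sum_mul, Finset.mul_sum]
  rw [Finset.sum_comm]
  simp only [mul_assoc]

lemma sum_third_moment_mul (π : κ → R) (β : κ → ι → R) (x : ι → R) :
    ∑ i, ∑ j, ∑ l, (∑ h, π h * (β h i * β h j * β h l)) * x i * x j * x l
      = ∑ h, π h * (∑ i, β h i * x i) ^ 3 := by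
  symm
  simp only [pow_three, Finset.mul_sum, Finset.sum_mul]
  rw [Finset.sum_comm]
  refine Finset.sum_congr rfl fun i _ => ?_
  rw [Finset.sum_comm]
  refine Finset.sum_congr rfl fun j _ => ?_
  rw [Finset.sum_comm]
  exact Finset.sum_congr rfl fun l _ => Finset.sum_congr rfl fun h _ => by ring

end MomentTensors

theorem eta3_decomposition_and_mean_zero_general {Ω : Type*} [MeasurableSpace Ω] (μ : Measure Ω)
    [IsProbabilityMeasure μ]
    {d k : ℕ} (π : Fin k → ℝ) (β : Fin k → Fin d → ℝ) (x : Fin d → ℝ)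
    (H : Ω → Fin k) (ε : Ω → ℝ)
    (hH : Measurable H)
    (hπ : ∀ h, 0 ≤ π h)
    (hdist : ∀ h, μ (H ⁻¹' {h}) = ENNReal.ofReal (π h))
    (hind : IndepFun H ε μ)
    (hεint : Integrable ε μ) (hεmean : ∫ ω, ε ω ∂μ = 0)
    (hε2int : Integrable (fun ω => ε ω ^ 2) μ)
    (hε3int : Integrable (fun ω => ε ω ^ 3) μ)
    (m2 m3 : ℝ) (hm2 : ∫ ω, ε ω ^ 2 ∂μ = m2) (hm3 : ∫ ω, ε ω ^ 3 ∂μ = m3)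
    (y : Ω → ℝ) (hy : ∀ ω, y ω = (∑ i, β (H ω) i * x i) + ε ω)
    (M1 : Fin d → ℝ) (hM1 : M1 = ∑ h, π h • β h)
    (M3 : Fin d → Fin d → Fin d → ℝ)
    (hM3 : M3 = fun i j l => ∑ h, π h * (β h i * β h j * β h l))
    (η3 : Ω → ℝ)
    (hη3 : ∀ ω, η3 ω =
      ((∑ i, β (H ω) i * x i) ^ 3 - ∑ i, ∑ j, ∑ l, M3 i j l * x i * x j * x l)
        + 3 * ε ω * (∑ i, β (H ω) i * x i) ^ 2
        + 3 * (ε ω ^ 2 * (∑ i, β (H ω) i * x i) - m2 * (∑ i, M1 i * x i))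
        + (ε ω ^ 3 - m3)) :
    (∀ ω, y ω ^ 3 = (∑ i, ∑ j, ∑ l, M3 i j l * x i * x j * x l)
        + 3 * m2 * (∑ i, M1 i * x i) + m3 + η3 ω)
      ∧ ∫ ω, η3 ω ∂μ = 0 := by
  refine ⟨fun ω => by rw [hy ω, hη3 ω]; ring, ?_⟩
  set c : Fin k → ℝ := fun h => ∑ i, β h i * x i
  have hmean (φ : Fin k → ℝ) : ∫ ω, φ (H ω) ∂μ = ∑ h, π h * φ h := by
    simp only [integral_comp_of_fintype hH, Measure.real, hdist, ENNReal.toReal_ofReal (hπ _)]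
  have hM3x : ∑ i, ∑ j, ∑ l, M3 i j l * x i * x j * x l = ∫ ω, c (H ω) ^ 3 ∂μ := by
    rw [hmean (c · ^ 3), hM3, sum_third_moment_mul]
  have hcε2 : m2 * ∑ i, M1 i * x i = ∫ ω, c (H ω) * ε ω ^ 2 ∂μ := by
    rw [hind.integral_comp_mul_comp_of_fintype hH c (ψ := (· ^ 2)) (by fun_prop) hε2int,
      hmean, hM1, sum_first_moment_mul, hm2, mul_comm]
  have hc2ε : ∫ ω, c (H ω) ^ 2 * ε ω ∂μ = 0 := by
    rw [hind.integral_comp_mul_comp_of_fintype hH (c · ^ 2) measurable_id' hεint, hεmean, mul_zero]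
  have hdecomp : η3 = fun ω => (c (H ω) ^ 3 - ∫ ω', c (H ω') ^ 3 ∂μ) + 3 * (c (H ω) ^ 2 * ε ω)
      + 3 * (c (H ω) * ε ω ^ 2 - ∫ ω', c (H ω') * ε ω' ^ 2 ∂μ) + (ε ω ^ 3 - ∫ ω', ε ω' ^ 3 ∂μ) := by
    funext ω
    rw [hη3, hM3x, hcε2, hm3]
    ring
  have hc3_int := integrable_comp_of_fintype (μ := μ) hH (c · ^ 3)
  have hc2ε_int := hind.integrable_comp_mul_comp_of_fintype hH (c · ^ 2) measurable_id' hεint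
  have hcε2_int :=
    hind.integrable_comp_mul_comp_of_fintype hH c (ψ := (· ^ 2)) (by fun_prop) hε2int
  rw [hdecomp, integral_add, integral_add, integral_add, integral_const_mul, integral_const_mul,
    hc2ε, integral_sub_integral_eq_zero hc3_int, integral_sub_integral_eq_zero hcε2_int,
    integral_sub_integral_eq_zero hε3int]
  · ring
  all_goals fun_prop

/-- In the mixture of linear regressions model, for a fixed covariate `x`,
`y³ = ⟨M₃, x^⊗3⟩ + 3E[ε²]⟨M₁, x⟩ + E[ε³] + η₃(x)` where
`η₃(x) = ⟨β_h^⊗3 − M₃, x^⊗3⟩ + 3ε⟨β_h^⊗2, x^⊗2⟩ + 3(ε²⟨β_h, x⟩ − E[ε²]⟨M₁, x⟩) + (ε³ − E[ε³])`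
has mean zero, with `M_p = ∑_h π_h β_h^⊗p`. -/
theorem eta3_decomposition_and_mean_zero {Ω : Type*} [MeasurableSpace Ω] (μ : Measure Ω)
    [IsProbabilityMeasure μ]
    {d k : ℕ} (π : Fin k → ℝ) (β : Fin k → Fin d → ℝ) (x : Fin d → ℝ)
    (H : Ω → Fin k) (ε : Ω → ℝ)
    (hH : Measurable H) (hε : Measurable ε)
    (hπ : ∀ h, 0 ≤ π h) (hπ1 : ∑ h, π h = 1)
    (hdist : ∀ h, μ (H ⁻¹' {h}) = ENNReal.ofReal (π h))
    (hind : IndepFun H ε μ)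
    (hεint : Integrable ε μ) (hεmean : ∫ ω, ε ω ∂μ = 0)
    (hε2int : Integrable (fun ω => ε ω ^ 2) μ)
    (hε3int : Integrable (fun ω => ε ω ^ 3) μ)
    (m2 m3 : ℝ) (hm2 : ∫ ω, ε ω ^ 2 ∂μ = m2) (hm3 : ∫ ω, ε ω ^ 3 ∂μ = m3)
    (y : Ω → ℝ) (hy : ∀ ω, y ω = (∑ i, β (H ω) i * x i) + ε ω)
    (M1 : Fin d → ℝ) (hM1 : M1 = ∑ h, π h • β h)
    (M3 : Fin d → Fin d → Fin d → ℝ)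
    (hM3 : M3 = fun i j l => ∑ h, π h * (β h i * β h j * β h l))
    (η3 : Ω → ℝ)
    (hη3 : ∀ ω, η3 ω =
      ((∑ i, β (H ω) i * x i) ^ 3 - ∑ i, ∑ j, ∑ l, M3 i j l * x i * x j * x l)
        + 3 * ε ω * (∑ i, β (H ω) i * x i) ^ 2
        + 3 * (ε ω ^ 2 * (∑ i, β (H ω) i * x i) - m2 * (∑ i, M1 i * x i))
        + (ε ω ^ 3 - m3)) :
    (∀ ω, y ω ^ 3 = (∑ i, ∑ j, ∑ l, M3 i j l * x i * x j * x l)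
        + 3 * m2 * (∑ i, M1 i * x i) + m3 + η3 ω)
      ∧ ∫ ω, η3 ω ∂μ = 0 :=
  eta3_decomposition_and_mean_zero_general μ π β x H ε hH hπ hdist hind hεint hεmean hε2int hε3int
    m2 m3 hm2 hm3 y hy M1 hM1 M3 hM3 η3 hη3
end

section
/- Suppose M2 = Σ_h π_h β_h β_h^T and M3 = Σ_h π_h β_h^⊗3 with π_h > 0 and β_h ∈ R^d linearly independent, and W ∈ R^{d×k} whitens M2 (W^T M2 W = I). Then the whitened tensor T = M3(W, W, W) ∈ (R^k)^⊗3, defined by T_{abc} = Σ_{i,j,l} (M3)_{ijl} W_{ia} W_{jb} W_{lc}, admits the orthogonal decomposition T = Σ_{h=1}^k π_h^{-1/2} v_h^⊗3 where v_h = √(π_h) W^T β_h are orthonormal. -/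
/-!
Put `u_h = Wᵀ β_h`, so `v_h = √π_h u_h`. Since `Wᵀ (β βᵀ) W = u uᵀ`, the whitening condition reads
`∑_h v_h v_hᵀ = 1`, i.e. `V Vᵀ = 1` for the square matrix `V` with columns `v_h`; hence also
`Vᵀ V = 1`, which is orthonormality. The tensor identity is multilinearity:
`M₃(W, W, W) = ∑_h π_h u_h^⊗3`, and `π_h u_h^⊗3 = π_h^{-1/2} v_h^⊗3`.
-/

open Matrix

namespace Matrix

variable {R m n ι : Type*}

theorem transpose_mul_vecMulVec_self_mul [CommSemiring R] [Fintype m] (W : Matrix m n R)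
    (x : m → R) : Wᵀ * vecMulVec x x * W = vecMulVec (Wᵀ *ᵥ x) (Wᵀ *ᵥ x) := by
  rw [mul_vecMulVec, vecMulVec_mul, ← mulVec_transpose]

theorem dotProduct_eq_one_apply_of_sum_vecMulVec_self_eq_one [CommRing R] [Fintype n]
    [DecidableEq n] {v : n → n → R} (hv : ∑ i, vecMulVec (v i) (v i) = 1) (g h : n) :
    v g ⬝ᵥ v h = (1 : Matrix n n R) g h := by
  have hVtV : (of v)ᵀ * of v = 1 := by
    rw [← hv]
    ext a b
    simp [mul_apply, sum_apply, vecMulVec_apply]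
  rw [← mul_eq_one_comm.mp hVtV]
  rfl

theorem sum_mul_mul_mul_eq_transpose_mulVec [CommSemiring R] [Fintype m] (W : Matrix m n R)
    (x : m → R) (a b c : n) :
    ∑ i, ∑ j, ∑ l, x i * x j * x l * W i a * W j b * W l c
      = (Wᵀ *ᵥ x) a * (Wᵀ *ᵥ x) b * (Wᵀ *ᵥ x) c := by
  simp only [mulVec, dotProduct, transpose_apply]
  rw [Finset.sum_mul_sum, Finset.sum_mul]
  simp only [Finset.sum_mul_sum]
  exact Finset.sum_congr rfl fun i _ => Finset.sum_congr rfl fun j _ =>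
    Finset.sum_congr rfl fun l _ => by ring

theorem sum_sum_mul_mul_mul_eq_transpose_mulVec [CommSemiring R] [Fintype m] [Fintype ι]
    (π : ι → R) (β : ι → m → R) (W : Matrix m n R) (a b c : n) :
    ∑ i, ∑ j, ∑ l, (∑ h, π h * (β h i * β h j * β h l)) * W i a * W j b * W l c
      = ∑ h, π h * ((Wᵀ *ᵥ β h) a * (Wᵀ *ᵥ β h) b * (Wᵀ *ᵥ β h) c) := by
  simp only [← sum_mul_mul_mul_eq_transpose_mulVec, Finset.mul_sum]
  simp only [Finset.sum_mul, mul_assoc,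
    Finset.sum_comm (s := (Finset.univ : Finset m)) (t := (Finset.univ : Finset ι))]

end Matrix

theorem whitened_tensor_orthogonal_decomposition_general {d k : ℕ}
    (π : Fin k → ℝ) (β : Fin k → Fin d → ℝ)
    (M2 : Matrix (Fin d) (Fin d) ℝ) (M3 : Fin d → Fin d → Fin d → ℝ)
    (W : Matrix (Fin d) (Fin k) ℝ)
    (hπ : ∀ h, 0 < π h)
    (hM2 : M2 = ∑ h, π h • Matrix.vecMulVec (β h) (β h))
    (hM3 : M3 = fun i j l => ∑ h, π h * (β h i * β h j * β h l))
    (hW : Wᵀ * M2 * W = 1)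
    (v : Fin k → Fin k → ℝ)
    (hv : v = fun h => Real.sqrt (π h) • Wᵀ.mulVec (β h))
    (T : Fin k → Fin k → Fin k → ℝ)
    (hT : T = fun a b c => ∑ i, ∑ j, ∑ l, M3 i j l * W i a * W j b * W l c) :
    (∀ a b c, T a b c = ∑ h, (Real.sqrt (π h))⁻¹ * (v h a * v h b * v h c))
      ∧ (∀ g h, v g ⬝ᵥ v h = if g = h then 1 else 0) := by
  have hsqrt : ∀ h, √(π h) * √(π h) = π h := fun h => Real.mul_self_sqrt (hπ h).le
  subst hT hM3 hM2
  refine ⟨fun a b c => ?_, fun g h => ?_⟩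
  · beta_reduce
    rw [sum_sum_mul_mul_mul_eq_transpose_mulVec]
    refine Finset.sum_congr rfl fun h _ => ?_
    have hsqrt_ne : √(π h) ≠ 0 := (Real.sqrt_pos.2 (hπ h)).ne'
    simp only [hv, Pi.smul_apply, smul_eq_mul]
    conv_lhs => rw [← hsqrt h]
    field_simp
  · rw [← one_apply]
    refine dotProduct_eq_one_apply_of_sum_vecMulVec_self_eq_one ?_ g h
    rw [← hW, Matrix.mul_sum, Matrix.sum_mul]
    refine Finset.sum_congr rfl fun h _ => ?_
    rw [hv, Matrix.mul_smul, Matrix.smul_mul, transpose_mul_vecMulVec_self_mul, smul_vecMulVec,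
      vecMulVec_smul, smul_smul, hsqrt]

/-- If `M₂ = ∑_h π_h β_h β_h^T` and `M₃ = ∑_h π_h β_h^⊗3` with `π_h > 0` and the `β_h`
linearly independent, and `W` whitens `M₂` (`W^T M₂ W = I`), then the whitened tensor
`T = M₃(W, W, W)` admits the orthogonal decomposition
`T = ∑_h π_h^{-1/2} v_h^⊗3` where `v_h = √(π_h) W^T β_h` are orthonormal. -/
theorem whitened_tensor_orthogonal_decomposition {d k : ℕ}
    (π : Fin k → ℝ) (β : Fin k → Fin d → ℝ)
    (M2 : Matrix (Fin d) (Fin d) ℝ) (M3 : Fin d → Fin d → Fin d → ℝ)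
    (W : Matrix (Fin d) (Fin k) ℝ)
    (hπ : ∀ h, 0 < π h)
    (hβ : LinearIndependent ℝ β)
    (hM2 : M2 = ∑ h, π h • Matrix.vecMulVec (β h) (β h))
    (hM3 : M3 = fun i j l => ∑ h, π h * (β h i * β h j * β h l))
    (hW : Wᵀ * M2 * W = 1)
    (v : Fin k → Fin k → ℝ)
    (hv : v = fun h => Real.sqrt (π h) • Wᵀ.mulVec (β h))
    (T : Fin k → Fin k → Fin k → ℝ)
    (hT : T = fun a b c => ∑ i, ∑ j, ∑ l, M3 i j l * W i a * W j b * W l c) :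
    (∀ a b c, T a b c = ∑ h, (Real.sqrt (π h))⁻¹ * (v h a * v h b * v h c))
      ∧ (∀ g h, v g ⬝ᵥ v h = if g = h then 1 else 0) :=
  whitened_tensor_orthogonal_decomposition_general π β M2 M3 W hπ hM2 hM3 hW v hv T hT
end

section
/- Let A be a rank-k d×d positive semidefinite matrix and Â a PSD matrix with ε̃ := ||Â − A||_op / σ_k(A) < 1/3. Let Ŵ whiten Â and define W = Ŵ U D^{−1/2} U^T where Ŵ^T A Ŵ = U D U^T is an eigendecomposition. Then ||I − D||_op ≤ ε̃/(1 − ε̃). -/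
open Matrix

/-- The ℓ²→ℓ² operator norm (spectral norm) of a real rectangular matrix. -/
noncomputable def opNorm {m n : ℕ} (A : Matrix (Fin m) (Fin n) ℝ) : ℝ :=
  ‖LinearMap.toContinuousLinearMap
      (Matrix.toLin (EuclideanSpace.basisFun (Fin n) ℝ).toBasis
        (EuclideanSpace.basisFun (Fin m) ℝ).toBasis A)‖

/-- Eigenvalues of a real matrix (junk value `0` if not symmetric). -/
noncomputable def eigVals {d : ℕ} (A : Matrix (Fin d) (Fin d) ℝ) : Fin d → ℝ :=
  if h : A.IsHermitian then h.eigenvalues else 0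

/-- `sval A j` is the `(j+1)`-th largest eigenvalue of the symmetric matrix `A`;
for a positive semidefinite matrix this is the `(j+1)`-th largest singular value. -/
noncomputable def sval {d : ℕ} (A : Matrix (Fin d) (Fin d) ℝ) (j : Fin d) : ℝ :=
  (eigVals A ∘ Tuple.sort (eigVals A)) j.rev

/-!
Since `Ŵᵀ Â Ŵ = 1`, we have `1 - D = (Ŵ U)ᵀ (Â - A) (Ŵ U)`, hence
`‖1 - D‖ ≤ ‖Ŵ‖² ‖Â - A‖ = ‖Â - A‖ / σ_k(Â)`. Weyl's inequality gives
`σ_k(Â) ≥ σ_k(A) - ‖Â - A‖ = (1 - ε̃) σ_k(A)`, and `σ_k(A) > 0` because `A` has rank `k`.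
-/

open scoped Matrix.Norms.L2Operator InnerProductSpace

theorem OrthonormalBasis.inner_eq_zero_of_mem_span_image {ι 𝕜 E : Type*} [Fintype ι] [RCLike 𝕜]
    [NormedAddCommGroup E] [InnerProductSpace 𝕜 E] (b : OrthonormalBasis ι 𝕜 E) {s : Set ι}
    {j : ι} (hj : j ∉ s) {x : E} (hx : x ∈ Submodule.span 𝕜 (b '' s)) : ⟪b j, x⟫_𝕜 = 0 := by
  have hspan : Submodule.span 𝕜 (b '' s) ≤ (𝕜 ∙ b j)ᗮ := by
    rw [Submodule.span_le]
    rintro _ ⟨i, hi, rfl⟩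
    exact Submodule.mem_orthogonal_singleton_iff_inner_right.2
      (b.inner_eq_zero fun hji ↦ hj (hji ▸ hi))
  exact Submodule.mem_orthogonal_singleton_iff_inner_right.1 (hspan hx)

theorem OrthonormalBasis.finrank_span_image_finset {ι 𝕜 E : Type*} [Fintype ι] [RCLike 𝕜]
    [NormedAddCommGroup E] [InnerProductSpace 𝕜 E] (b : OrthonormalBasis ι 𝕜 E) (s : Finset ι) :
    Module.finrank 𝕜 (Submodule.span 𝕜 (b '' s)) = s.card := by
  have hli : LinearIndependent 𝕜 fun i : (s : Set ι) ↦ b i :=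
    b.orthonormal.linearIndependent.comp Subtype.val Subtype.val_injective
  rw [Set.image_eq_range, finrank_span_eq_card hli]
  simp

theorem Submodule.exists_mem_inf_ne_zero_of_finrank_lt_add {K V : Type*} [DivisionRing K]
    [AddCommGroup V] [Module K V] [FiniteDimensional K V] {S T : Submodule K V}
    (h : Module.finrank K V < Module.finrank K S + Module.finrank K T) :
    ∃ x ∈ S ⊓ T, x ≠ 0 := by
  refine (S ⊓ T).ne_bot_iff.1 fun hbot ↦ ?_
  have hsum := Submodule.finrank_sup_add_finrank_inf_eq S T
  rw [hbot, finrank_bot] at hsum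
  have := (S ⊔ T).finrank_le
  omega

theorem ContinuousLinearMap.real_inner_apply_le_opNorm_mul_sq {E : Type*} [NormedAddCommGroup E]
    [InnerProductSpace ℝ E] (T : E →L[ℝ] E) (x : E) : ⟪x, T x⟫_ℝ ≤ ‖T‖ * ‖x‖ ^ 2 :=
  calc ⟪x, T x⟫_ℝ ≤ ‖x‖ * ‖T x‖ := real_inner_le_norm _ _
    _ ≤ ‖x‖ * (‖T‖ * ‖x‖) := by gcongr; exact T.le_opNorm x
    _ = ‖T‖ * ‖x‖ ^ 2 := by ring

namespace Matrix.IsHermitian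

variable {n : Type*} [Fintype n] [DecidableEq n] {M : Matrix n n ℝ}

theorem inner_eigenvectorBasis_toEuclideanCLM (hM : M.IsHermitian) (j : n)
    (x : EuclideanSpace ℝ n) :
    ⟪hM.eigenvectorBasis j, toEuclideanCLM (𝕜 := ℝ) M x⟫_ℝ =
      hM.eigenvalues j * ⟪hM.eigenvectorBasis j, x⟫_ℝ := by
  have hsymm : (toEuclideanLin M).IsSymmetric := isSymmetric_toEuclideanLin_iff.2 hM
  have heig : toEuclideanCLM (𝕜 := ℝ) M (hM.eigenvectorBasis j) =
      hM.eigenvalues j • hM.eigenvectorBasis j :=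
    congrArg (WithLp.toLp 2) (hM.mulVec_eigenvectorBasis j)
  calc _ = ⟪toEuclideanCLM (𝕜 := ℝ) M (hM.eigenvectorBasis j), x⟫_ℝ :=
        (hsymm (hM.eigenvectorBasis j) x).symm
    _ = _ := by rw [heig, real_inner_smul_left]

theorem inner_toEuclideanCLM_self_eq_sum (hM : M.IsHermitian) (x : EuclideanSpace ℝ n) :
    ⟪x, toEuclideanCLM (𝕜 := ℝ) M x⟫_ℝ =
      ∑ j, hM.eigenvalues j * ⟪hM.eigenvectorBasis j, x⟫_ℝ ^ 2 := by
  rw [← hM.eigenvectorBasis.sum_inner_mul_inner]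
  refine Finset.sum_congr rfl fun j _ ↦ ?_
  rw [inner_eigenvectorBasis_toEuclideanCLM, real_inner_comm]
  ring

theorem norm_sq_eq_sum (hM : M.IsHermitian) (x : EuclideanSpace ℝ n) :
    ‖x‖ ^ 2 = ∑ j, ⟪hM.eigenvectorBasis j, x⟫_ℝ ^ 2 := by
  simp [← hM.eigenvectorBasis.sum_sq_norm_inner_right x]

theorem mul_norm_sq_le_inner_of_mem_span (hM : M.IsHermitian) {s : Set n} {c : ℝ}
    (hc : ∀ j ∈ s, c ≤ hM.eigenvalues j) {x : EuclideanSpace ℝ n}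
    (hx : x ∈ Submodule.span ℝ (hM.eigenvectorBasis '' s)) :
    c * ‖x‖ ^ 2 ≤ ⟪x, toEuclideanCLM (𝕜 := ℝ) M x⟫_ℝ := by
  rw [hM.norm_sq_eq_sum, hM.inner_toEuclideanCLM_self_eq_sum, Finset.mul_sum]
  refine Finset.sum_le_sum fun j _ ↦ ?_
  by_cases hj : j ∈ s
  · exact mul_le_mul_of_nonneg_right (hc j hj) (sq_nonneg _)
  · simp [hM.eigenvectorBasis.inner_eq_zero_of_mem_span_image hj hx]

theorem inner_le_mul_norm_sq_of_mem_span (hM : M.IsHermitian) {s : Set n} {c : ℝ}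
    (hc : ∀ j ∈ s, hM.eigenvalues j ≤ c) {x : EuclideanSpace ℝ n}
    (hx : x ∈ Submodule.span ℝ (hM.eigenvectorBasis '' s)) :
    ⟪x, toEuclideanCLM (𝕜 := ℝ) M x⟫_ℝ ≤ c * ‖x‖ ^ 2 := by
  rw [hM.norm_sq_eq_sum, hM.inner_toEuclideanCLM_self_eq_sum, Finset.mul_sum]
  refine Finset.sum_le_sum fun j _ ↦ ?_
  by_cases hj : j ∈ s
  · exact mul_le_mul_of_nonneg_right (hc j hj) (sq_nonneg _)
  · simp [hM.eigenvectorBasis.inner_eq_zero_of_mem_span_image hj hx]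

end Matrix.IsHermitian

section Sval

variable {d : ℕ} {M N : Matrix (Fin d) (Fin d) ℝ}

theorem eigVals_of_isHermitian (hM : M.IsHermitian) : eigVals M = hM.eigenvalues := dif_pos hM

theorem sval_le_eigVals_sort {j i : Fin d} (h : j.rev ≤ i) :
    sval M j ≤ eigVals M (Tuple.sort (eigVals M) i) :=
  Tuple.monotone_sort _ h

theorem eigVals_sort_le_sval {j i : Fin d} (h : i ≤ j.rev) :
    eigVals M (Tuple.sort (eigVals M) i) ≤ sval M j :=
  Tuple.monotone_sort _ h

/-- Weyl's inequality. The eigenvectors of `M` at sorted positions `≥ j.rev` and those of `N` at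
sorted positions `≤ j.rev` span subspaces of dimensions `j + 1` and `d - j`, which therefore meet
nontrivially; compare the quadratic forms of `M` and `N` at a common nonzero vector. -/
theorem sval_sub_norm_sub_le (hM : M.IsHermitian) (hN : N.IsHermitian) (j : Fin d) :
    sval M j - ‖N - M‖ ≤ sval N j := by
  set σM := Tuple.sort (eigVals M)
  set σN := Tuple.sort (eigVals N)
  obtain ⟨x, ⟨hxM, hxN⟩, hx⟩ := Submodule.exists_mem_inf_ne_zero_of_finrank_lt_add
    (S := Submodule.span ℝ (hM.eigenvectorBasis '' ((Finset.Ici j.rev).image σM)))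
    (T := Submodule.span ℝ (hN.eigenvectorBasis '' ((Finset.Iic j.rev).image σN))) (by
      rw [OrthonormalBasis.finrank_span_image_finset, OrthonormalBasis.finrank_span_image_finset,
        Finset.card_image_of_injective _ σM.injective,
        Finset.card_image_of_injective _ σN.injective, Fin.card_Ici, Fin.card_Iic,
        finrank_euclideanSpace_fin]
      omega)
  have hlower : sval M j * ‖x‖ ^ 2 ≤ ⟪x, toEuclideanCLM (𝕜 := ℝ) M x⟫_ℝ := by
    refine hM.mul_norm_sq_le_inner_of_mem_span (fun v hv ↦ ?_) hxM
    obtain ⟨i, hi, rfl⟩ := Finset.mem_image.1 hv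
    rw [← eigVals_of_isHermitian hM]
    exact sval_le_eigVals_sort (Finset.mem_Ici.1 hi)
  have hupper : ⟪x, toEuclideanCLM (𝕜 := ℝ) N x⟫_ℝ ≤ sval N j * ‖x‖ ^ 2 := by
    refine hN.inner_le_mul_norm_sq_of_mem_span (fun v hv ↦ ?_) hxN
    obtain ⟨i, hi, rfl⟩ := Finset.mem_image.1 hv
    rw [← eigVals_of_isHermitian hN]
    exact eigVals_sort_le_sval (Finset.mem_Iic.1 hi)
  have hpert : ⟪x, toEuclideanCLM (𝕜 := ℝ) M x⟫_ℝ - ⟪x, toEuclideanCLM (𝕜 := ℝ) N x⟫_ℝ ≤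
      ‖N - M‖ * ‖x‖ ^ 2 := by
    have := (toEuclideanCLM (𝕜 := ℝ) (M - N)).real_inner_apply_le_opNorm_mul_sq x
    rwa [l2_opNorm_toEuclideanCLM, norm_sub_rev, map_sub, _root_.sub_apply,
      inner_sub_right] at this
  have hx2 : 0 < ‖x‖ ^ 2 := by positivity
  nlinarith

theorem sval_pos_of_lt_rank (hA : M.PosSemidef) {j : Fin d} (hj : (j : ℕ) < M.rank) :
    0 < sval M j := by
  set σ := Tuple.sort (eigVals M)
  by_contra! hnonpos
  have hzero : ∀ i ≤ j.rev, hA.isHermitian.eigenvalues (σ i) = 0 := fun i hi ↦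
    le_antisymm (eigVals_of_isHermitian hA.isHermitian ▸ (eigVals_sort_le_sval hi).trans hnonpos)
      (hA.eigenvalues_nonneg _)
  have hsub : ({i | hA.isHermitian.eigenvalues i ≠ 0} : Finset (Fin d)) ⊆
      (Finset.Ioi j.rev).image σ := by
    intro i hi
    refine Finset.mem_image.2 ⟨σ.symm i, Finset.mem_Ioi.2 ?_, σ.apply_symm_apply i⟩
    by_contra! hle
    exact (Finset.mem_filter.1 hi).2 (by simpa using hzero _ hle)
  have hcard := Finset.card_le_card hsub
  rw [Finset.card_image_of_injective _ σ.injective, Fin.card_Ioi, ← Fintype.card_subtype,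
    ← hA.isHermitian.rank_eq_card_non_zero_eigs, Fin.val_rev] at hcard
  omega

end Sval

theorem opNorm_eq_l2_opNorm {m n : ℕ} (A : Matrix (Fin m) (Fin n) ℝ) : opNorm A = ‖A‖ := by
  rw [l2_opNorm_def, toEuclideanLin_eq_toLin_orthonormal]
  rfl

namespace Matrix

variable {m n : Type*} [Fintype m] [Fintype n]

theorem l2_opNorm_transpose [DecidableEq m] [DecidableEq n] (A : Matrix m n ℝ) : ‖Aᵀ‖ = ‖A‖ := by
  rw [← conjTranspose_eq_transpose_of_trivial, l2_opNorm_conjTranspose]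

theorem l2_opNorm_le_one_of_transpose_mul_self_eq_one [DecidableEq n] {U : Matrix m n ℝ}
    (hU : Uᵀ * U = 1) : ‖U‖ ≤ 1 := by
  have hUU : ‖U‖ * ‖U‖ ≤ 1 := by
    rw [← l2_opNorm_conjTranspose_mul_self, conjTranspose_eq_transpose_of_trivial, hU,
      ← l2_opNorm_toEuclideanCLM, map_one]
    exact ContinuousLinearMap.norm_id_le
  nlinarith [norm_nonneg U]

theorem l2_opNorm_mul_le_of_transpose_mul_self_eq_one [DecidableEq n] (B : Matrix m n ℝ)
    {U : Matrix n n ℝ} (hU : Uᵀ * U = 1) : ‖B * U‖ ≤ ‖B‖ :=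
  (l2_opNorm_mul B U).trans
    (mul_le_of_le_one_right (norm_nonneg _) (l2_opNorm_le_one_of_transpose_mul_self_eq_one hU))

theorem l2_opNorm_transpose_mul_mul_le [DecidableEq m] [DecidableEq n] (B : Matrix m n ℝ)
    (X : Matrix m m ℝ) :
    ‖Bᵀ * X * B‖ ≤ ‖B‖ ^ 2 * ‖X‖ :=
  calc ‖Bᵀ * X * B‖ ≤ ‖Bᵀ‖ * ‖X‖ * ‖B‖ :=
        (l2_opNorm_mul _ _).trans (by gcongr; exact l2_opNorm_mul _ _)
    _ = ‖B‖ ^ 2 * ‖X‖ := by rw [l2_opNorm_transpose]; ring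

theorem one_sub_eq_transpose_mul_sub_mul [DecidableEq n] {W : Matrix m n ℝ} {A Ahat : Matrix m m ℝ}
    {U D : Matrix n n ℝ} (hwhiten : Wᵀ * Ahat * W = 1) (hU : Uᵀ * U = 1)
    (hdecomp : Wᵀ * A * W = U * D * Uᵀ) :
    1 - D = (W * U)ᵀ * (Ahat - A) * (W * U) :=
  calc 1 - D = Uᵀ * (1 - U * D * Uᵀ) * U := by
        simp only [Matrix.mul_sub, Matrix.sub_mul, Matrix.mul_one, hU, ← Matrix.mul_assoc]
        simp only [Matrix.mul_assoc, hU, Matrix.mul_one, Matrix.one_mul]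
    _ = (W * U)ᵀ * (Ahat - A) * (W * U) := by
        rw [← hwhiten, ← hdecomp]
        simp only [transpose_mul, Matrix.mul_sub, Matrix.sub_mul, Matrix.mul_assoc]

end Matrix

/-- Let `A` be a rank-`k` `d×d` PSD matrix and `Â` a PSD matrix with
`ε̃ := ‖Â − A‖_op/σ_k(A) < 1/3`. Let `Ŵ` (canonically) whiten `Â` and let
`Ŵ^T A Ŵ = U D U^T` be an eigendecomposition (`U` orthogonal, `D` diagonal).
Then `‖I − D‖_op ≤ ε̃/(1 − ε̃)`. -/
theorem whitening_eigendecomposition_perturbation {d k : ℕ} (hk : 0 < k) (hkd : k ≤ d)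
    (A Ahat : Matrix (Fin d) (Fin d) ℝ) (What : Matrix (Fin d) (Fin k) ℝ)
    (U : Matrix (Fin k) (Fin k) ℝ) (dvec : Fin k → ℝ)
    (hA : A.PosSemidef) (hrank : A.rank = k) (hAhat : Ahat.PosSemidef)
    (σk εt : ℝ)
    (hσk : σk = sval A ⟨k - 1, by omega⟩)
    (hεt : εt = opNorm (Ahat - A) / σk)
    (hεlt : εt < 1 / 3)
    (hwhiten : Whatᵀ * Ahat * What = 1)
    (hWnorm : opNorm What = (Real.sqrt (sval Ahat ⟨k - 1, by omega⟩))⁻¹)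
    (hU : Uᵀ * U = 1)
    (hdecomp : Whatᵀ * A * What = U * Matrix.diagonal dvec * Uᵀ) :
    opNorm (1 - Matrix.diagonal dvec) ≤ εt / (1 - εt) := by
  set σhat := sval Ahat ⟨k - 1, by omega⟩
  rw [opNorm_eq_l2_opNorm] at hεt hWnorm ⊢
  have hσk_pos : 0 < σk :=
    hσk ▸ sval_pos_of_lt_rank hA (by rw [hrank]; exact Nat.sub_one_lt hk.ne')
  have hnorm : ‖Ahat - A‖ = εt * σk := by rw [hεt]; field_simp
  have hεt_nonneg : 0 ≤ εt := hεt ▸ by positivity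
  have hweyl : σk * (1 - εt) ≤ σhat := by
    have := hσk ▸ sval_sub_norm_sub_le hA.isHermitian hAhat.isHermitian ⟨k - 1, by omega⟩
    linarith
  have hσhat_pos : 0 < σhat := lt_of_lt_of_le (by nlinarith) hweyl
  have hWsq : ‖What‖ ^ 2 = σhat⁻¹ := by rw [hWnorm, inv_pow, Real.sq_sqrt hσhat_pos.le]
  calc ‖1 - diagonal dvec‖ ≤ ‖What * U‖ ^ 2 * ‖Ahat - A‖ := by
        rw [one_sub_eq_transpose_mul_sub_mul hwhiten hU hdecomp]
        exact l2_opNorm_transpose_mul_mul_le _ _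
    _ ≤ ‖What‖ ^ 2 * ‖Ahat - A‖ := by
        gcongr
        exact l2_opNorm_mul_le_of_transpose_mul_self_eq_one What hU
    _ = εt * σk / σhat := by rw [hWsq, hnorm]; ring
    _ ≤ εt * σk / (σk * (1 - εt)) := by gcongr; nlinarith
    _ = εt / (1 - εt) := by field_simp
end
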